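/- Let G be a real 4×4 symmetric matrix with det G < 0 and let F be a real 4×4 antisymmetric matrix. Denote by G^{μν} the entries of G⁻¹, define F^{μν} := ∑_{α,β} G^{μα}G^{νβ}F_{αβ} and F̃^{μν} := (1/(2√(−det G))) ∑_{ρ,σ} ε^{μνρσ} F_{ρσ}, where ε^{μνρσ} is the totally antisymmetric symbol with ε^{0123} = 1. Then det(G + F) = det G · ( 1 + (1/2) ∑_{μ,ν} F_{μν}F^{μν} − (1/16) ( ∑_{μ,ν} F_{μν}F̃^{μν} )² ). -/

import Mathlib

open Matrix

/-- The totally antisymmetric Levi-Civita symbol on `Fin 4` with `ε₀₁₂₃ = 1`: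
it equals the sign of the permutation `(μ,ν,ρ,σ)` of `(0,1,2,3)` and `0` if two
indices coincide (Vandermonde-product formula). -/
noncomputable def eps4 (μ ν ρ σ : Fin 4) : ℝ :=
  (((ν : ℝ) - μ) * ((ρ : ℝ) - μ) * ((σ : ℝ) - μ) *
    ((ρ : ℝ) - ν) * ((σ : ℝ) - ν) * ((σ : ℝ) - ρ)) / 12

/-!
Write `G + F = G (1 + M)` with `M = G⁻¹F`. Transposition turns `M` into `-F G⁻¹`, which has the
same power traces as `-M`, so the traces of odd powers of `M` vanish. For a `4 × 4` matrix,
Newton's identities then reduce `det (1 + M)` to `1 - tr (M²) / 2 + det M`. Finally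
`-tr (M²) = F_{μν}F^{μν}`, `det M = Pf(F)² / det G` and `F_{μν}F̃^{μν} = 4 Pf(F) / √(-det G)`.
-/

namespace Matrix

section Antisymmetric

variable {n R : Type*} [CommRing R]

theorem apply_eq_neg_apply_of_transpose_eq_neg {F : Matrix n n R} (hF : Fᵀ = -F) (i j : n) :
    F j i = -F i j :=
  congrFun (congrFun hF i) j

theorem apply_self_eq_zero_of_transpose_eq_neg [IsAddTorsionFree R] {F : Matrix n n R}
    (hF : Fᵀ = -F) (i : n) : F i i = 0 :=
  self_eq_neg.mp (apply_eq_neg_apply_of_transpose_eq_neg hF i i)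

variable [Fintype n] [DecidableEq n]

theorem trace_mul_pow_comm (A B : Matrix n n R) :
    ∀ k : ℕ, trace ((A * B) ^ k) = trace ((B * A) ^ k)
  | 0 => rfl
  | k + 1 => by
    rw [pow_succ, ← Matrix.mul_assoc, mul_pow_mul, trace_mul_comm, ← Matrix.mul_assoc, ← pow_succ']

theorem trace_mul_pow_eq_zero_of_odd [IsAddTorsionFree R] {S F : Matrix n n R} (hS : Sᵀ = S)
    (hF : Fᵀ = -F) {k : ℕ} (hk : Odd k) : trace ((S * F) ^ k) = 0 := by
  refine self_eq_neg.mp ?_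
  calc trace ((S * F) ^ k) = trace (((S * F) ^ k)ᵀ) := (trace_transpose _).symm
    _ = trace ((-(F * S)) ^ k) := by rw [transpose_pow, transpose_mul, hS, hF, Matrix.neg_mul]
    _ = -trace ((S * F) ^ k) := by rw [hk.neg_pow, trace_neg, trace_mul_pow_comm]

theorem sum_mul_raise_eq_neg_trace_sq {S F : Matrix n n R} (hS : Sᵀ = S) (hF : Fᵀ = -F) :
    ∑ μ, ∑ ν, F μ ν * ∑ α, ∑ β, S μ α * S ν β * F α β = -trace ((S * F) ^ 2) := by
  calc ∑ μ, ∑ ν, F μ ν * ∑ α, ∑ β, S μ α * S ν β * F α β = trace (S * F * Sᵀ * Fᵀ) := by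
        simp only [trace, diag, mul_apply, transpose_apply, Finset.sum_mul, Finset.mul_sum]
        refine Fintype.sum_congr _ _ fun μ => Fintype.sum_congr _ _ fun ν => ?_
        rw [Finset.sum_comm]
        exact Fintype.sum_congr _ _ fun α => Fintype.sum_congr _ _ fun β => by ring
    _ = -trace ((S * F) ^ 2) := by
        rw [hS, hF, Matrix.mul_neg, trace_neg, sq, Matrix.mul_assoc]

end Antisymmetric

section FinFour

variable {R : Type*} [CommRing R]

theorem six_mul_det_one_add_fin_four (M : Matrix (Fin 4) (Fin 4) R) :
    6 * det (1 + M) = 6 + 6 * trace M + 3 * (trace M ^ 2 - trace (M ^ 2))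
      + (trace M ^ 3 - 3 * trace M * trace (M ^ 2) + 2 * trace (M ^ 3)) + 6 * det M := by
  simp [det_succ_row_zero, Fin.sum_univ_succ, Fin.succAbove, trace, pow_succ, mul_apply,
    one_apply]
  ring

theorem det_one_add_fin_four_of_trace_eq_zero {K : Type*} [Field K] [CharZero K]
    {M : Matrix (Fin 4) (Fin 4) K} (h₁ : trace M = 0) (h₃ : trace (M ^ 3) = 0) :
    det (1 + M) = 1 - trace (M ^ 2) / 2 + det M := by
  have h := six_mul_det_one_add_fin_four M
  rw [h₁, h₃] at h
  linear_combination h / 6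

def pfaffianFinFour (F : Matrix (Fin 4) (Fin 4) R) : R :=
  F 0 1 * F 2 3 - F 0 2 * F 1 3 + F 0 3 * F 1 2

theorem det_eq_pfaffianFinFour_sq [IsAddTorsionFree R] {F : Matrix (Fin 4) (Fin 4) R}
    (hF : Fᵀ = -F) : det F = pfaffianFinFour F ^ 2 := by
  have h := apply_eq_neg_apply_of_transpose_eq_neg hF
  have h₀ := apply_self_eq_zero_of_transpose_eq_neg hF
  simp [det_succ_row_zero, Fin.sum_univ_succ, Fin.succAbove, pfaffianFinFour,
    h₀ 0, h₀ 1, h₀ 2, h₀ 3, h 0 1, h 0 2, h 0 3, h 1 2, h 1 3, h 2 3]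
  ring

theorem sum_eps4_contract_eq_eight_mul_pfaffianFinFour {F : Matrix (Fin 4) (Fin 4) ℝ}
    (hF : Fᵀ = -F) :
    ∑ μ, ∑ ν, F μ ν * ∑ ρ, ∑ σ, eps4 μ ν ρ σ * F ρ σ = 8 * pfaffianFinFour F := by
  have h := apply_eq_neg_apply_of_transpose_eq_neg hF
  have h₀ := apply_self_eq_zero_of_transpose_eq_neg hF
  simp [Fin.sum_univ_four, eps4, pfaffianFinFour,
    h₀ 0, h₀ 1, h₀ 2, h₀ 3, h 0 1, h 0 2, h 0 3, h 1 2, h 1 3, h 2 3]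
  ring

end FinFour

end Matrix

/-- Equation (14) of the paper: the exact Born–Infeld expansion of
`det (G + F)` for a Lorentzian-signature symmetric `G` (`det G < 0`) and an
antisymmetric `F` in four dimensions, through the invariants `F_{μν}F^{μν}`
and `F_{μν}F̃^{μν}`, where indices are raised with `G⁻¹` and `F̃` is the
metric dual of `F`. -/
theorem born_infeld_det_expansion
    (G F : Matrix (Fin 4) (Fin 4) ℝ)
    (hGsymm : Gᵀ = G) (hGdet : G.det < 0) (hFanti : Fᵀ = -F)
    (Fup : Matrix (Fin 4) (Fin 4) ℝ)
    (hFup : ∀ μ ν, Fup μ ν = ∑ α, ∑ β, G⁻¹ μ α * G⁻¹ ν β * F α β)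
    (Ftil : Matrix (Fin 4) (Fin 4) ℝ)
    (hFtil : ∀ μ ν, Ftil μ ν =
      (1 / (2 * Real.sqrt (-G.det))) * ∑ ρ, ∑ σ, eps4 μ ν ρ σ * F ρ σ) :
    (G + F).det = G.det *
      (1 + (1 / 2) * (∑ μ, ∑ ν, F μ ν * Fup μ ν)
        - (1 / 16) * (∑ μ, ∑ ν, F μ ν * Ftil μ ν) ^ 2) := by
  have hG : IsUnit G.det := hGdet.ne.isUnit
  have hGinv : G⁻¹ᵀ = G⁻¹ := by rw [transpose_nonsing_inv, hGsymm]
  have hfactor : G + F = G * (1 + G⁻¹ * F) := by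
    rw [Matrix.mul_add, Matrix.mul_one, ← Matrix.mul_assoc, mul_nonsing_inv G hG, Matrix.one_mul]
  have htrace₁ : trace (G⁻¹ * F) = 0 := by
    simpa using trace_mul_pow_eq_zero_of_odd hGinv hFanti odd_one
  have htrace₃ : trace ((G⁻¹ * F) ^ 3) = 0 :=
    trace_mul_pow_eq_zero_of_odd hGinv hFanti (by decide)
  have hFFup : ∑ μ, ∑ ν, F μ ν * Fup μ ν = -trace ((G⁻¹ * F) ^ 2) := by
    simp only [hFup]
    exact sum_mul_raise_eq_neg_trace_sq hGinv hFanti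
  have hFFtil : ∑ μ, ∑ ν, F μ ν * Ftil μ ν = 4 * pfaffianFinFour F / Real.sqrt (-G.det) := by
    simp only [hFtil, mul_left_comm (F _ _), ← Finset.mul_sum]
    rw [sum_eps4_contract_eq_eight_mul_pfaffianFinFour hFanti]
    ring
  rw [hfactor, det_mul, det_one_add_fin_four_of_trace_eq_zero htrace₁ htrace₃, det_mul,
    det_nonsing_inv, Ring.inverse_eq_inv', det_eq_pfaffianFinFour_sq hFanti, hFFup, hFFtil,
    div_pow, Real.sq_sqrt (by linarith)]
  field_simp
  ring
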